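/- arXiv:1209.1420 — 7 statements merged into one kernel-verified Lean document; each statement's English description precedes it below -/
import Mathlib

section
/- For every field k and all Zorn vector matrices x and y over k, the norm of their Zorn product equals the product of their norms: N(x * y) = N(x) · N(y). -/
open Matrix

/-- A Zorn vector matrix (split octonion) over `k`: a quadruple `(a, v, w, d)`
with `a, d ∈ k` and `v, w ∈ (Fin 3 → k)`. -/
abbrev Zorn (k : Type*) := k × (Fin 3 → k) × (Fin 3 → k) × k

variable {k : Type*} [Field k]

/-- The Zorn product of two Zorn vector matrices. -/
def zmul (x y : Zorn k) : Zorn k :=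
  (x.1 * y.1 + x.2.1 ⬝ᵥ y.2.2.1,
   x.1 • y.2.1 + y.2.2.2 • x.2.1 - x.2.2.1 ⨯₃ y.2.2.1,
   y.1 • x.2.2.1 + x.2.2.2 • y.2.2.1 + x.2.1 ⨯₃ y.2.1,
   x.2.2.2 * y.2.2.2 + x.2.2.1 ⬝ᵥ y.2.1)

/-- The norm of a Zorn vector matrix. -/
def zN (x : Zorn k) : k := x.1 * x.2.2.2 - x.2.1 ⬝ᵥ x.2.2.1

/-!
Expanding `N(x * y)`, the terms `a a' (w ⬝ᵥ v')` and `d d' (v ⬝ᵥ w')` cancel, the four triple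
products with a repeated vector vanish, and the Binet–Cauchy identity turns the remaining
`(w ×₃ w') ⬝ᵥ (v ×₃ v')` into `(v ⬝ᵥ w)(v' ⬝ᵥ w') - (v ⬝ᵥ w')(w ⬝ᵥ v')`; what is left factors as
`(a d - v ⬝ᵥ w)(a' d' - v' ⬝ᵥ w')`.
-/

theorem dotProduct_zorn_vectors {R : Type*} [CommRing R] (a d a' d' : R) (v w v' w' : Fin 3 → R) :
    (a • v' + d' • v - w ⨯₃ w') ⬝ᵥ (a' • w + d • w' + v ⨯₃ v') =
      a * a' * (w ⬝ᵥ v') + a * d * (v' ⬝ᵥ w') + a' * d' * (v ⬝ᵥ w) + d * d' * (v ⬝ᵥ w')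
        - (v ⬝ᵥ w * v' ⬝ᵥ w' - v ⬝ᵥ w' * w ⬝ᵥ v') := by
  have hw : w ⨯₃ w' ⬝ᵥ w = 0 := by rw [dotProduct_comm, dot_self_cross]
  have hw' : w ⨯₃ w' ⬝ᵥ w' = 0 := by rw [dotProduct_comm, dot_cross_self]
  simp only [dotProduct_add, dotProduct_smul, add_dotProduct, sub_dotProduct, smul_dotProduct,
    dot_self_cross, dot_cross_self, cross_dot_cross, hw, hw', smul_eq_mul]
  rw [dotProduct_comm v' w, dotProduct_comm w' v, dotProduct_comm w v, dotProduct_comm w' v']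
  ring

/-- The norm of the Zorn product equals the product of the norms. -/
theorem zN_zmul (x y : Zorn k) : zN (zmul x y) = zN x * zN y := by
  obtain ⟨a, v, w, d⟩ := x
  obtain ⟨a', v', w', d'⟩ := y
  simp only [zN, zmul, dotProduct_zorn_vectors]
  ring
end

section
/- Let k be a field and g ∈ SL₃(k). The map θ(g) sending the Zorn vector matrix (a, v, w, d) to (a, g *ᵥ v, (g⁻¹)ᵀ *ᵥ w, d) is a k-linear bijection of the Zorn vector matrices over k which fixes the identity and is multiplicative: θ(g)(x * y) = θ(g)(x) * θ(g)(y) for all x, y. -/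
open Matrix

variable {k : Type*} [Field k]

/-- The identity Zorn vector matrix. -/
def zone : Zorn k := (1, 0, 0, 1)

/-- The map `θ(g)` associated to `g ∈ SL₃(k)`. -/
noncomputable def theta (g : Matrix.SpecialLinearGroup (Fin 3) k) (x : Zorn k) : Zorn k :=
  (x.1, (g : Matrix (Fin 3) (Fin 3) k) *ᵥ x.2.1,
   ((g : Matrix (Fin 3) (Fin 3) k)⁻¹)ᵀ *ᵥ x.2.2.1, x.2.2.2)

/-!
On the two vector slots `θ(g)` acts by the pair `(g, g⁻ᵀ)`, which preserves the pairing
`v ⬝ᵥ w`. The cofactor identity `(A v) ⨯₃ (A w) = adj(A)ᵀ (v ⨯₃ w)` shows that for `det g = 1`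
the cross product of two `g`-transformed vectors is `g⁻ᵀ`-transformed, and since `g⁻ᵀ` again has
determinant one with `(g⁻ᵀ)⁻ᵀ = g`, the same holds with the roles exchanged. These are exactly the
terms of the Zorn product. Bijectivity holds because `θ` is an action of `SL₃(k)`.
-/

namespace Matrix

section InverseTranspose

variable {n R : Type*} [Fintype n] [DecidableEq n] [CommRing R]

theorem nonsing_inv_eq_adjugate_of_det_eq_one {A : Matrix n n R} (hA : A.det = 1) :
    A⁻¹ = adjugate A := by
  rw [inv_def, hA, Ring.inverse_one, one_smul]

theorem det_inv_transpose_of_det_eq_one {A : Matrix n n R} (hA : A.det = 1) :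
    A⁻¹ᵀ.det = 1 := by
  rw [det_transpose, det_nonsing_inv, hA, Ring.inverse_one]

theorem inv_transpose_inv_transpose {A : Matrix n n R} (hA : IsUnit A.det) : A⁻¹ᵀ⁻¹ᵀ = A := by
  rw [transpose_nonsing_inv, transpose_transpose, nonsing_inv_nonsing_inv A hA]

theorem inv_transpose_mul (A B : Matrix n n R) : (A * B)⁻¹ᵀ = A⁻¹ᵀ * B⁻¹ᵀ := by
  rw [mul_inv_rev, transpose_mul]

theorem mulVec_dotProduct_inv_transpose_mulVec {A : Matrix n n R} (hA : IsUnit A.det)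
    (v w : n → R) : (A *ᵥ v) ⬝ᵥ (A⁻¹ᵀ *ᵥ w) = v ⬝ᵥ w := by
  rw [mulVec_transpose, dotProduct_comm, ← dotProduct_mulVec, mulVec_mulVec,
    nonsing_inv_mul A hA, one_mulVec, dotProduct_comm]

theorem inv_transpose_mulVec_dotProduct_mulVec {A : Matrix n n R} (hA : IsUnit A.det)
    (v w : n → R) : (A⁻¹ᵀ *ᵥ w) ⬝ᵥ (A *ᵥ v) = w ⬝ᵥ v := by
  rw [dotProduct_comm, mulVec_dotProduct_inv_transpose_mulVec hA, dotProduct_comm]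

end InverseTranspose

section CrossProduct

variable {R : Type*} [CommRing R]

theorem mulVec_cross_mulVec (A : Matrix (Fin 3) (Fin 3) R) (v w : Fin 3 → R) :
    (A *ᵥ v) ⨯₃ (A *ᵥ w) = (adjugate A)ᵀ *ᵥ (v ⨯₃ w) := by
  ext i
  fin_cases i <;>
    simp only [Fin.zero_eta, Fin.mk_one, Fin.reduceFinMk, Fin.isValue, Nat.succ_eq_add_one,
      Nat.reduceAdd, cross_apply, mulVec, dotProduct, Fin.sum_univ_three, adjugate_fin_three,
      transpose_apply, of_apply, cons_val', cons_val_fin_one, cons_val_zero, cons_val_one,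
      cons_val] <;>
    ring

theorem mulVec_cross_mulVec_of_det_eq_one {A : Matrix (Fin 3) (Fin 3) R} (hA : A.det = 1)
    (v w : Fin 3 → R) : (A *ᵥ v) ⨯₃ (A *ᵥ w) = A⁻¹ᵀ *ᵥ (v ⨯₃ w) := by
  rw [mulVec_cross_mulVec, nonsing_inv_eq_adjugate_of_det_eq_one hA]

end CrossProduct

end Matrix

theorem theta_mul_apply (g h : Matrix.SpecialLinearGroup (Fin 3) k) (x : Zorn k) :
    theta (g * h) x = theta g (theta h x) := by
  have coe_mul : ((g * h : Matrix.SpecialLinearGroup (Fin 3) k) : Matrix (Fin 3) (Fin 3) k) =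
      g * h := rfl
  simp only [theta, coe_mul, inv_transpose_mul, mulVec_mulVec]

theorem theta_one_apply (x : Zorn k) : theta 1 x = x := by
  simp [theta]

theorem theta_bijective (g : Matrix.SpecialLinearGroup (Fin 3) k) : Function.Bijective (theta g) :=
  Function.bijective_iff_has_inverse.2 ⟨theta g⁻¹,
    fun x => by rw [← theta_mul_apply, inv_mul_cancel, theta_one_apply],
    fun x => by rw [← theta_mul_apply, mul_inv_cancel, theta_one_apply]⟩

theorem theta_add (g : Matrix.SpecialLinearGroup (Fin 3) k) (x y : Zorn k) :
    theta g (x + y) = theta g x + theta g y := by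
  simp [theta, mulVec_add]

theorem theta_smul (g : Matrix.SpecialLinearGroup (Fin 3) k) (c : k) (x : Zorn k) :
    theta g (c • x) = c • theta g x := by
  simp [theta, mulVec_smul]

theorem theta_zone (g : Matrix.SpecialLinearGroup (Fin 3) k) : theta g zone = zone := by
  simp [theta, zone]

theorem theta_zmul (g : Matrix.SpecialLinearGroup (Fin 3) k) (x y : Zorn k) :
    theta g (zmul x y) = zmul (theta g x) (theta g y) := by
  have hg : (g : Matrix (Fin 3) (Fin 3) k).det = 1 := g.det_coe
  have hg_unit : IsUnit (g : Matrix (Fin 3) (Fin 3) k).det := by rw [hg]; exact isUnit_one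
  have cross_inv_transpose (w w' : Fin 3 → k) :
      ((g : Matrix (Fin 3) (Fin 3) k)⁻¹ᵀ *ᵥ w) ⨯₃ ((g : Matrix (Fin 3) (Fin 3) k)⁻¹ᵀ *ᵥ w') =
        (g : Matrix (Fin 3) (Fin 3) k) *ᵥ (w ⨯₃ w') := by
    rw [mulVec_cross_mulVec_of_det_eq_one (det_inv_transpose_of_det_eq_one hg),
      inv_transpose_inv_transpose hg_unit]
  simp only [theta, zmul, mulVec_add, mulVec_sub, mulVec_smul,
    mulVec_dotProduct_inv_transpose_mulVec hg_unit, mulVec_cross_mulVec_of_det_eq_one hg,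
    inv_transpose_mulVec_dotProduct_mulVec hg_unit, cross_inv_transpose]

/-- For `g ∈ SL₃(k)`, the map `θ(g)` is a `k`-linear bijection of the Zorn
vector matrices fixing the identity and multiplicative for the Zorn product. -/
theorem theta_is_automorphism (g : Matrix.SpecialLinearGroup (Fin 3) k) :
    Function.Bijective (theta g) ∧
    (∀ x y : Zorn k, theta g (x + y) = theta g x + theta g y) ∧
    (∀ (c : k) (x : Zorn k), theta g (c • x) = c • theta g x) ∧
    theta g zone = zone ∧
    (∀ x y : Zorn k, theta g (zmul x y) = zmul (theta g x) (theta g y)) :=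
  ⟨theta_bijective g, theta_add g, theta_smul g, theta_zone g, theta_zmul g⟩
end

section
/- Let k be a field of characteristic different from 2. If f is a k-linear bijection of the Zorn vector matrices over k satisfying f(x * y) = f(x) * f(y) for all x, y, and f fixes every diagonal element, i.e. f(a, 0, 0, d) = (a, 0, 0, d) for all a, d ∈ k, then there exists a unique g ∈ SL₃(k) such that f = θ(g), where θ(g)(a, v, w, d) = (a, g *ᵥ v, (g⁻¹)ᵀ *ᵥ w, d). -/
open Matrix

variable {k : Type*} [Field k]

/-!
The idempotents `e₁ = (1, 0, 0, 0)` and `e₂ = (0, 0, 0, 1)` cut out the vector and covector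
parts of `x` as `e₁ (x e₂)` and `e₂ (x e₁)`. Since `f` fixes both, it acts blockwise as
`(a, v, w, d) ↦ (a, A v, B w, d)`. Multiplicativity on a vector times a covector gives
`(A v) ⬝ (B w) = v ⬝ w`, i.e. `B = (A⁻¹)ᵀ`; on two vectors it gives `A v × A w = B (v × w)`.
Pairing the latter with `A u` shows that `A` preserves the triple product, so `det A = 1`.
-/

theorem triple_product_mulVec {R : Type*} [CommRing R] (A : Matrix (Fin 3) (Fin 3) R)
    (u v w : Fin 3 → R) :
    (A *ᵥ u) ⬝ᵥ (A *ᵥ v) ⨯₃ (A *ᵥ w) = A.det * (u ⬝ᵥ v ⨯₃ w) := by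
  have hrows : of ![A *ᵥ u, A *ᵥ v, A *ᵥ w] = of ![u, v, w] * Aᵀ := by
    ext i j
    fin_cases i <;> simp [Matrix.mul_apply, mulVec, dotProduct, mul_comm]
  rw [triple_product_eq_det, triple_product_eq_det]
  change det (of ![A *ᵥ u, A *ᵥ v, A *ᵥ w]) = A.det * det (of ![u, v, w])
  rw [hrows, det_mul, det_transpose, mul_comm]

theorem transpose_mul_eq_one_of_mulVec_dotProduct_mulVec {n R : Type*} [Fintype n]
    [DecidableEq n] [CommSemiring R] {A B : Matrix n n R}
    (h : ∀ v w, (A *ᵥ v) ⬝ᵥ (B *ᵥ w) = v ⬝ᵥ w) : Aᵀ * B = 1 := by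
  ext i j
  have hij := h (Pi.single i 1) (Pi.single j 1)
  rw [mulVec_single_one, mulVec_single_one, single_one_dotProduct] at hij
  simpa [Matrix.mul_apply, dotProduct, Matrix.one_apply, Pi.single_apply, eq_comm] using hij

theorem eq_transpose_inv_of_mulVec_dotProduct_mulVec {n R : Type*} [Fintype n] [DecidableEq n]
    [CommRing R] {A B : Matrix n n R} (h : ∀ v w, (A *ᵥ v) ⬝ᵥ (B *ᵥ w) = v ⬝ᵥ w) :
    B = A⁻¹ᵀ := by
  rw [transpose_nonsing_inv]
  exact (inv_eq_right_inv (transpose_mul_eq_one_of_mulVec_dotProduct_mulVec h)).symm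

theorem det_eq_one_of_mulVec_cross_mulVec {R : Type*} [CommRing R]
    {A B : Matrix (Fin 3) (Fin 3) R} (hdot : ∀ v w, (A *ᵥ v) ⬝ᵥ (B *ᵥ w) = v ⬝ᵥ w)
    (hcross : ∀ v w, (A *ᵥ v) ⨯₃ (A *ᵥ w) = B *ᵥ (v ⨯₃ w)) : A.det = 1 := by
  have h := triple_product_mulVec A (Pi.single 0 1) (Pi.single 1 1) (Pi.single 2 1)
  have hbasis : (Pi.single 0 1 : Fin 3 → R) ⬝ᵥ (Pi.single 1 1) ⨯₃ (Pi.single 2 1) = 1 := by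
    simp [cross_apply]
  rwa [hcross, hdot, hbasis, mul_one, eq_comm] at h

namespace Zorn

theorem zmul_zmul_eq_vec (x : Zorn k) :
    zmul (1, 0, 0, 0) (zmul x (0, 0, 0, 1)) = (0, x.2.1, 0, 0) := by
  simp [zmul]

theorem zmul_zmul_eq_covec (x : Zorn k) :
    zmul (0, 0, 0, 1) (zmul x (1, 0, 0, 0)) = (0, 0, x.2.2.1, 0) := by
  simp [zmul]

def vecBlock (f : Zorn k →ₗ[k] Zorn k) : Matrix (Fin 3) (Fin 3) k :=
  LinearMap.toMatrix' (LinearMap.fst k (Fin 3 → k) ((Fin 3 → k) × k) ∘ₗ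
    LinearMap.snd k k _ ∘ₗ f ∘ₗ
    LinearMap.inr k k _ ∘ₗ LinearMap.inl k (Fin 3 → k) ((Fin 3 → k) × k))

def covecBlock (f : Zorn k →ₗ[k] Zorn k) : Matrix (Fin 3) (Fin 3) k :=
  LinearMap.toMatrix' (LinearMap.fst k (Fin 3 → k) k ∘ₗ
    LinearMap.snd k (Fin 3 → k) ((Fin 3 → k) × k) ∘ₗ LinearMap.snd k k _ ∘ₗ f ∘ₗ
    LinearMap.inr k k _ ∘ₗ LinearMap.inr k (Fin 3 → k) _ ∘ₗ LinearMap.inl k (Fin 3 → k) k)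

theorem vecBlock_mulVec (f : Zorn k →ₗ[k] Zorn k) (v : Fin 3 → k) :
    vecBlock f *ᵥ v = (f (0, v, 0, 0)).2.1 := by
  rw [vecBlock, LinearMap.toMatrix'_mulVec]
  rfl

theorem covecBlock_mulVec (f : Zorn k →ₗ[k] Zorn k) (w : Fin 3 → k) :
    covecBlock f *ᵥ w = (f (0, 0, w, 0)).2.2.1 := by
  rw [covecBlock, LinearMap.toMatrix'_mulVec]
  rfl

section Multiplicative

variable {f : Zorn k →ₗ[k] Zorn k}

theorem map_vec (hmul : ∀ x y, f (zmul x y) = zmul (f x) (f y))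
    (h₁ : f (1, 0, 0, 0) = (1, 0, 0, 0)) (h₂ : f (0, 0, 0, 1) = (0, 0, 0, 1)) (v : Fin 3 → k) :
    f (0, v, 0, 0) = (0, vecBlock f *ᵥ v, 0, 0) :=
  calc f (0, v, 0, 0) = f (zmul (1, 0, 0, 0) (zmul (0, v, 0, 0) (0, 0, 0, 1))) := by
        rw [zmul_zmul_eq_vec]
    _ = zmul (1, 0, 0, 0) (zmul (f (0, v, 0, 0)) (0, 0, 0, 1)) := by rw [hmul, hmul, h₁, h₂]
    _ = (0, vecBlock f *ᵥ v, 0, 0) := by rw [zmul_zmul_eq_vec, vecBlock_mulVec]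

theorem map_covec (hmul : ∀ x y, f (zmul x y) = zmul (f x) (f y))
    (h₁ : f (1, 0, 0, 0) = (1, 0, 0, 0)) (h₂ : f (0, 0, 0, 1) = (0, 0, 0, 1)) (w : Fin 3 → k) :
    f (0, 0, w, 0) = (0, 0, covecBlock f *ᵥ w, 0) :=
  calc f (0, 0, w, 0) = f (zmul (0, 0, 0, 1) (zmul (0, 0, w, 0) (1, 0, 0, 0))) := by
        rw [zmul_zmul_eq_covec]
    _ = zmul (0, 0, 0, 1) (zmul (f (0, 0, w, 0)) (1, 0, 0, 0)) := by rw [hmul, hmul, h₁, h₂]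
    _ = (0, 0, covecBlock f *ᵥ w, 0) := by rw [zmul_zmul_eq_covec, covecBlock_mulVec]

theorem map_eq_blocks (hmul : ∀ x y, f (zmul x y) = zmul (f x) (f y))
    (h₁ : f (1, 0, 0, 0) = (1, 0, 0, 0)) (h₂ : f (0, 0, 0, 1) = (0, 0, 0, 1)) (x : Zorn k) :
    f x = (x.1, vecBlock f *ᵥ x.2.1, covecBlock f *ᵥ x.2.2.1, x.2.2.2) := by
  obtain ⟨a, v, w, d⟩ := x
  have hx : ((a, v, w, d) : Zorn k) =
      a • (1, 0, 0, 0) + (0, v, 0, 0) + (0, 0, w, 0) + d • (0, 0, 0, 1) := by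
    simp
  rw [hx, map_add, map_add, map_add, map_smul, map_smul, h₁, h₂, map_vec hmul h₁ h₂,
    map_covec hmul h₁ h₂]
  simp

theorem vecBlock_mulVec_dotProduct (hmul : ∀ x y, f (zmul x y) = zmul (f x) (f y))
    (h₁ : f (1, 0, 0, 0) = (1, 0, 0, 0)) (h₂ : f (0, 0, 0, 1) = (0, 0, 0, 1)) (v w : Fin 3 → k) :
    (vecBlock f *ᵥ v) ⬝ᵥ (covecBlock f *ᵥ w) = v ⬝ᵥ w := by
  have h := congrArg Prod.fst (hmul (0, v, 0, 0) (0, 0, w, 0))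
  simpa [map_eq_blocks hmul h₁ h₂, zmul] using h.symm

theorem vecBlock_mulVec_cross (hmul : ∀ x y, f (zmul x y) = zmul (f x) (f y))
    (h₁ : f (1, 0, 0, 0) = (1, 0, 0, 0)) (h₂ : f (0, 0, 0, 1) = (0, 0, 0, 1)) (v w : Fin 3 → k) :
    (vecBlock f *ᵥ v) ⨯₃ (vecBlock f *ᵥ w) = covecBlock f *ᵥ (v ⨯₃ w) := by
  have h := congrArg (fun z : Zorn k => z.2.2.1) (hmul (0, v, 0, 0) (0, w, 0, 0))
  simpa [map_eq_blocks hmul h₁ h₂, zmul] using h.symm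

end Multiplicative

theorem theta_injective :
    Function.Injective (theta : Matrix.SpecialLinearGroup (Fin 3) k → Zorn k → Zorn k) := by
  intro g g' h
  ext i j
  simpa [theta, mulVec_single_one] using congrArg (fun θ => (θ (0, Pi.single j 1, 0, 0)).2.1 i) h

end Zorn

open Zorn in
theorem exists_unique_theta_general (f : Zorn k →ₗ[k] Zorn k)
    (hmul : ∀ x y : Zorn k, f (zmul x y) = zmul (f x) (f y))
    (hdiag : ∀ a d : k, f (a, 0, 0, d) = (a, 0, 0, d)) :
    ∃! g : Matrix.SpecialLinearGroup (Fin 3) k, ∀ x : Zorn k, f x = theta g x := by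
  have h₁ := hdiag 1 0
  have h₂ := hdiag 0 1
  have hdot := vecBlock_mulVec_dotProduct hmul h₁ h₂
  let g₀ : Matrix.SpecialLinearGroup (Fin 3) k :=
    ⟨vecBlock f, det_eq_one_of_mulVec_cross_mulVec hdot (vecBlock_mulVec_cross hmul h₁ h₂)⟩
  have hf : ∀ x, f x = theta g₀ x := fun x => by
    rw [map_eq_blocks hmul h₁ h₂, theta, eq_transpose_inv_of_mulVec_dotProduct_mulVec hdot]
  exact ⟨g₀, hf, fun g hg => theta_injective (funext fun x => (hg x).symm.trans (hf x))⟩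

/-- Over a field of characteristic not 2, every `k`-linear bijective
multiplicative map of the Zorn vector matrices fixing all diagonal elements
is `θ(g)` for a unique `g ∈ SL₃(k)`. -/
theorem exists_unique_theta (h2 : (2 : k) ≠ 0) (f : Zorn k →ₗ[k] Zorn k)
    (hbij : Function.Bijective f)
    (hmul : ∀ x y : Zorn k, f (zmul x y) = zmul (f x) (f y))
    (hdiag : ∀ a d : k, f (a, 0, 0, d) = (a, 0, 0, d)) :
    ∃! g : Matrix.SpecialLinearGroup (Fin 3) k, ∀ x : Zorn k, f x = theta g x :=
  exists_unique_theta_general f hmul hdiag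
end

section
/- Let k be a field. Define η : Matrix (Fin 2) (Fin 2) k → (Zorn vector matrices over k) by η !![α, β; γ, δ] = (α, (β,0,0), (γ,0,0), δ), and let J be the Zorn vector matrix (0, (0,1,0), (0,1,0), 0). Then the Zorn product realizes the Cayley–Dickson doubling of Mat₂(k) with its adjugate involution: for all 2 × 2 matrices a, b, c, d over k, (η(a) + η(b) * J) * (η(c) + η(d) * J) = η(a·c + (adjugate d)·b) + η(d·a + b·(adjugate c)) * J. -/
open Matrix

variable {k : Type*} [Field k]

/-- The embedding `η` of 2 × 2 matrices into the Zorn vector matrices. -/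
def eta (m : Matrix (Fin 2) (Fin 2) k) : Zorn k :=
  (m 0 0, ![m 0 1, 0, 0], ![m 1 0, 0, 0], m 1 1)

/-- The splitting element `J`. -/
def Jz : Zorn k := (0, ![0, 1, 0], ![0, 1, 0], 0)


/- In the coordinates of the Zorn product, `η a + η b * J` is the split octonion whose eight
entries are those of `a` and `b` (two of them negated), so the Cayley–Dickson identity reduces
to comparing eight polynomial identities in the entries of `a`, `b`, `c`, `d`. -/

def zornOfPair (a b : Matrix (Fin 2) (Fin 2) k) : Zorn k :=
  (a 0 0, ![a 0 1, b 0 0, -b 1 0], ![a 1 0, b 1 1, b 0 1], a 1 1)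

theorem zmul_eta_Jz (b : Matrix (Fin 2) (Fin 2) k) :
    zmul (eta b) Jz = (0, ![0, b 0 0, -b 1 0], ![0, b 1 1, b 0 1], 0) := by
  simp [zmul, eta, Jz, cross_apply]

theorem eta_add_zmul_eta_Jz (a b : Matrix (Fin 2) (Fin 2) k) :
    eta a + zmul (eta b) Jz = zornOfPair a b := by
  rw [zmul_eta_Jz]
  simp [eta, zornOfPair]

theorem zmul_zornOfPair (a b c d : Matrix (Fin 2) (Fin 2) k) :
    zmul (zornOfPair a b) (zornOfPair c d) =
      zornOfPair (a * c + d.adjugate * b) (d * a + b * c.adjugate) := by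
  simp only [zmul, zornOfPair, Prod.mk.injEq]
  refine ⟨?_, ?_, ?_, ?_⟩ <;> try (ext i; fin_cases i)
  all_goals
    simp [cross_apply, dotProduct, Fin.sum_univ_three, Matrix.mul_apply, Fin.sum_univ_two,
      adjugate_fin_two, vecMul]
    ring

/-- The Zorn product realizes the Cayley–Dickson doubling of `Mat₂(k)` with
its adjugate involution. -/
theorem zorn_cayley_dickson (a b c d : Matrix (Fin 2) (Fin 2) k) :
    zmul (eta a + zmul (eta b) Jz) (eta c + zmul (eta d) Jz) =
      eta (a * c + d.adjugate * b) + zmul (eta (d * a + b * c.adjugate)) Jz := by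
  simp only [eta_add_zmul_eta_Jz, zmul_zornOfPair]
end

section
/- Let k be a field of characteristic different from 2. If f is a k-linear bijection of the Zorn vector matrices over k satisfying f(x * y) = f(x) * f(y) for all x, y, and f(η(a)) = η(a) for every 2 × 2 matrix a over k, then there exists a unique 2 × 2 matrix g over k with det g = 1 such that f(η(a) + η(b) * J) = η(a) + η(g·b) * J for all 2 × 2 matrices a, b over k. -/
open Matrix

variable {k : Type*} [Field k]

/-!
Because `f` is multiplicative and fixes `η(Mat₂(k))`, the element `z = f(J)` satisfies the same
identity `z·(η(a)·z) = η(adj a)` as `J` does. Comparing coordinates in this identity for matrix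
units `a` forces `z = η(g)·J` with `det g = 1`; then `f(η(b)·J) = η(b)·z = η(g·b)·J`.
Uniqueness of `g` is injectivity of `b ↦ η(b)·J`.
-/

lemma zorn_ext {R : Type*} {x y : Zorn R} (h1 : x.1 = y.1) (h2 : ∀ i, x.2.1 i = y.2.1 i)
    (h3 : ∀ i, x.2.2.1 i = y.2.2.1 i) (h4 : x.2.2.2 = y.2.2.2) : x = y :=
  Prod.ext h1 (Prod.ext (funext h2) (Prod.ext (funext h3) h4))

lemma eta_zmul_eta_zmul_Jz (g b : Matrix (Fin 2) (Fin 2) k) :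
    zmul (eta b) (zmul (eta g) Jz) = zmul (eta (g * b)) Jz := by
  apply zorn_ext <;>
    simp [zmul, eta, Jz, dotProduct, Fin.sum_univ_three, cross_apply, Matrix.mul_apply,
      Fin.sum_univ_two, Fin.forall_fin_succ] <;> ring_nf <;> simp

lemma Jz_zmul_eta_zmul_Jz (a : Matrix (Fin 2) (Fin 2) k) :
    zmul Jz (zmul (eta a) Jz) = eta (adjugate a) := by
  rw [adjugate_fin_two]
  apply zorn_ext <;> simp [zmul, eta, Jz, dotProduct, Fin.sum_univ_three, cross_apply]

lemma eta_zmul_Jz_injective :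
    Function.Injective (fun b : Matrix (Fin 2) (Fin 2) k => zmul (eta b) Jz) := by
  intro g g' h
  have c1 := congrFun (congrArg (fun v => v.2.1) h) 1
  have c2 := congrFun (congrArg (fun v => v.2.1) h) 2
  have c3 := congrFun (congrArg (fun v => v.2.2.1) h) 1
  have c4 := congrFun (congrArg (fun v => v.2.2.1) h) 2
  simp [zmul, eta, Jz, dotProduct, Fin.sum_univ_three, cross_apply] at c1 c2 c3 c4
  ext i j
  fin_cases i <;> fin_cases j
  exacts [c1, c4, c2, c3]

lemma exists_det_eq_one_of_zmul_eta_zmul_eq_eta_adjugate (z : Zorn k)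
    (hz : ∀ a, zmul z (zmul (eta a) z) = eta (adjugate a)) :
    ∃ g : Matrix (Fin 2) (Fin 2) k, g.det = 1 ∧ zmul (eta g) Jz = z := by
  have e1 := congrArg Prod.fst (hz !![1, 0; 0, 0])
  have e2 := congrFun (congrArg (fun v => v.2.1) (hz !![0, 0; 1, 0])) 0
  have e3 := congrFun (congrArg (fun v => v.2.2.1) (hz !![0, 1; 0, 0])) 0
  have e4 := congrArg (fun v => v.2.2.2) (hz !![0, 0; 0, 1])
  have e5 := congrArg (fun v => v.2.2.2) (hz !![1, 0; 0, 0])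
  simp [zmul, eta, adjugate_fin_two, dotProduct, Fin.sum_univ_three, cross_apply,
    vecHead, vecTail] at e1 e2 e3 e4 e5
  -- `η(g)·J = (0, (0, g₀₀, -g₁₀), (0, g₁₁, g₀₁), 0)`, so `g` is read off from `z`.
  refine ⟨!![z.2.1 1, z.2.2.1 2; -z.2.1 2, z.2.2.1 1], ?_, ?_⟩
  · rw [det_fin_two_of]
    linear_combination e5 - z.2.2.1 0 * e2
  · apply zorn_ext
    · simp [zmul, eta, Jz, dotProduct, Fin.sum_univ_three]
      linear_combination -e1
    · intro i
      fin_cases i <;> simp [zmul, eta, Jz, dotProduct, Fin.sum_univ_three, cross_apply]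
      linear_combination -e2
    · intro i
      fin_cases i <;> simp [zmul, eta, Jz, dotProduct, Fin.sum_univ_three, cross_apply]
      linear_combination -e3
    · simp [zmul, eta, Jz, dotProduct, Fin.sum_univ_three]
      linear_combination -e4

theorem exists_unique_gamma_general (f : Zorn k →ₗ[k] Zorn k)
    (hmul : ∀ x y : Zorn k, f (zmul x y) = zmul (f x) (f y))
    (hfix : ∀ a : Matrix (Fin 2) (Fin 2) k, f (eta a) = eta a) :
    ∃! g : Matrix (Fin 2) (Fin 2) k, g.det = 1 ∧
      ∀ a b : Matrix (Fin 2) (Fin 2) k,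
        f (eta a + zmul (eta b) Jz) = eta a + zmul (eta (g * b)) Jz := by
  have hsandwich (a : Matrix (Fin 2) (Fin 2) k) :
      zmul (f Jz) (zmul (eta a) (f Jz)) = eta (adjugate a) := by
    rw [← hfix a, ← hmul, ← hmul, Jz_zmul_eta_zmul_Jz, hfix]
  obtain ⟨g, hdet, hg⟩ := exists_det_eq_one_of_zmul_eta_zmul_eq_eta_adjugate _ hsandwich
  have hfJ (b : Matrix (Fin 2) (Fin 2) k) : f (zmul (eta b) Jz) = zmul (eta (g * b)) Jz := by
    rw [hmul, hfix, ← hg, eta_zmul_eta_zmul_Jz]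
  refine ⟨g, ⟨hdet, fun a b => by rw [map_add, hfix, hfJ]⟩, ?_⟩
  rintro g' ⟨-, hg'⟩
  have h := hg' 0 1
  rw [map_add, hfix, hfJ, mul_one, mul_one] at h
  exact eta_zmul_Jz_injective (add_right_injective _ h).symm

/-- Over a field of characteristic not 2, every `k`-linear bijective
multiplicative map of the Zorn vector matrices fixing `η(Mat₂(k))` pointwise
is of the form `η(a) + η(b)·J ↦ η(a) + η(g·b)·J` for a unique `g` of
determinant 1. -/
theorem exists_unique_gamma (h2 : (2 : k) ≠ 0) (f : Zorn k →ₗ[k] Zorn k)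
    (hbij : Function.Bijective f)
    (hmul : ∀ x y : Zorn k, f (zmul x y) = zmul (f x) (f y))
    (hfix : ∀ a : Matrix (Fin 2) (Fin 2) k, f (eta a) = eta a) :
    ∃! g : Matrix (Fin 2) (Fin 2) k, g.det = 1 ∧
      ∀ a b : Matrix (Fin 2) (Fin 2) k,
        f (eta a + zmul (eta b) Jz) = eta a + zmul (eta (g * b)) Jz :=
  exists_unique_gamma_general f hmul hfix
end

section
/- Let k be a field. Every injective k-linear map f of the Zorn vector matrices over k to themselves satisfying f(1) = 1 and f(x * y) = f(x) * f(y) for all x, y automatically preserves the norm: N(f(x)) = N(x) for all Zorn vector matrices x. -/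
/-! Every Zorn vector matrix satisfies its quadratic equation `x² - T(x) x + N(x) 1 = 0`, so
`f(x)² = f(x²)` gives `(T(f x) - T(x)) f(x) = (N(f x) - N(x)) 1`. If the traces agree, so do
the norms; otherwise `f x` is a multiple of `1`, and injectivity forces `x = f x`. -/

open Matrix

variable {k : Type*} [Field k]

def zT (x : Zorn k) : k := x.1 + x.2.2.2

lemma zone_ne_zero : (zone : Zorn k) ≠ 0 := by
  simp [zone]

lemma zmul_self (x : Zorn k) : zmul x x = zT x • x - zN x • zone := by
  obtain ⟨a, v, w, d⟩ := x
  simp only [zmul, zT, zN, zone, Prod.ext_iff, Prod.smul_mk, Prod.mk_sub_mk, smul_eq_mul,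
    cross_self, dotProduct_comm w v]
  refine ⟨by ring, ?_, ?_, by ring⟩ <;>
  · funext i
    simp only [Pi.add_apply, Pi.sub_apply, Pi.smul_apply, Pi.zero_apply, smul_eq_mul]
    ring

lemma sub_zT_smul_apply_eq (f : Zorn k →ₗ[k] Zorn k) (hone : f zone = zone)
    (hmul : ∀ x y : Zorn k, f (zmul x y) = zmul (f x) (f y)) (x : Zorn k) :
    (zT (f x) - zT x) • f x = (zN (f x) - zN x) • zone := by
  have h := hmul x x
  rw [zmul_self, zmul_self, map_sub, map_smul, map_smul, hone] at h
  rw [sub_smul, sub_smul]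
  linear_combination (norm := module) -h

lemma LinearMap.apply_eq_self_of_smul_apply_eq_smul {V : Type*} [AddCommGroup V] [Module k V]
    {f : V →ₗ[k] V} (hf : Function.Injective f) {e : V} (he : f e = e) {x : V} {a b : k}
    (ha : a ≠ 0) (h : a • f x = b • e) : f x = x := by
  have hfx : f x = (a⁻¹ * b) • e := by
    rw [mul_smul, ← h, smul_smul, inv_mul_cancel₀ ha, one_smul]
  have hx : x = (a⁻¹ * b) • e := hf (by rw [hfx, map_smul, he])
  rw [hfx, hx]

/-- Every injective `k`-linear unital multiplicative self-map of the Zorn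
vector matrices automatically preserves the norm. -/
theorem norm_preserved (f : Zorn k →ₗ[k] Zorn k)
    (hinj : Function.Injective f)
    (hone : f zone = zone)
    (hmul : ∀ x y : Zorn k, f (zmul x y) = zmul (f x) (f y)) :
    ∀ x : Zorn k, zN (f x) = zN x := by
  intro x
  have key := sub_zT_smul_apply_eq f hone hmul x
  by_cases hT : zT (f x) - zT x = 0
  · rw [hT, zero_smul, eq_comm, smul_eq_zero] at key
    exact sub_eq_zero.mp (key.resolve_right zone_ne_zero)
  · rw [LinearMap.apply_eq_self_of_smul_apply_eq_smul hinj hone hT key]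
end

section
/- Let k be a field. The k-linear map D on Zorn vector matrices given by D(a, (v₁,v₂,v₃), (w₁,w₂,w₃), d) = (0, (0, −v₃, 0), (0, 0, w₂), 0) is a derivation for the Zorn product, i.e. D(x * y) = D(x) * y + x * D(y) for all x, y, and satisfies D ∘ D = 0. -/
open Matrix

variable {k : Type*} [Field k]

/-- The long-root vector `E_γ`:
`D(a, (v₁,v₂,v₃), (w₁,w₂,w₃), d) = (0, (0, −v₃, 0), (0, 0, w₂), 0)`. -/
def Dlong (x : Zorn k) : Zorn k :=
  (0, ![0, -x.2.1 2, 0], ![0, 0, x.2.2.1 1], 0)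

theorem Dlong_zmul (x y : Zorn k) :
    Dlong (zmul x y) = zmul (Dlong x) y + zmul x (Dlong y) := by
  ext i <;> try fin_cases i
  all_goals
    simp only [Dlong, zmul, Prod.fst_add, Prod.snd_add, Pi.add_apply, Pi.sub_apply,
      Pi.smul_apply, smul_eq_mul, cross_apply, vec3_dotProduct, Fin.isValue,
      Fin.zero_eta, Fin.mk_one, Fin.reduceFinMk, cons_val]
    ring

theorem Dlong_Dlong (x : Zorn k) : Dlong (Dlong x) = 0 := by
  ext i <;> try fin_cases i
  all_goals simp [Dlong]

/-- `Dlong` is a derivation for the Zorn product and squares to zero. -/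
theorem Dlong_derivation :
    (∀ x y : Zorn k, Dlong (zmul x y) = zmul (Dlong x) y + zmul x (Dlong y)) ∧
    (Dlong ∘ Dlong = (0 : Zorn k → Zorn k)) :=
  ⟨Dlong_zmul, funext Dlong_Dlong⟩
end
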